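/- Let V be a finite-dimensional rational vector space with an increasing filtration W and a complex structure V_C = V ⊗ ℚ ℂ with a decreasing filtration F (indexed so that graded pieces gr^F_i are considered for i = 0, -1, -2). Suppose both filtrations are strictly compatible in the sense that the sequence 0 → gr^F_0(W_1 V_C) → gr^F_0 V_C → gr^F_0(gr^W_2 V_C) → 0 is exact, and suppose the natural maps gr^W_i V → gr^F_0(gr^W_i V_C) are injective for i = 0, 1. Then the natural map ker(V → gr^F_0 V_C) → ker(gr^W_2 V → gr^F_0(gr^W_2 V_C)) is injective. -/
import Mathlib


/-- Lemma 4.3 (injectivity of (1,1)-kernels restricted to weight 2), abstract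
linear-algebra version.  `V` is the rational mixed Hodge structure of weight ≤ 2
(with weight filtration `W0 ≤ W1 ≤ V`, `W₋₁ = 0`), `GB = gr^F_0 V_ℂ`,
`GA = gr^F_0 (W₁ V_ℂ)`, `GC = gr^F_0 (gr^W_2 V_ℂ)`, and `H0, H1` are
`gr^F_0 (gr^W_i V_ℂ)` for `i = 0, 1`.  The conclusion says that the natural map
`ker(V → gr^F_0 V_ℂ) → ker(gr^W_2 V → gr^F_0 (gr^W_2 V_ℂ))` is injective, i.e.
an element of the first kernel lying in `W1` (so mapping to `0` in `gr^W_2 V`)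
must vanish. -/
theorem stmt0
    {V GA GB GC H0 H1 : Type*}
    [AddCommGroup V] [Module ℚ V]
    [AddCommGroup GA] [Module ℚ GA]
    [AddCommGroup GB] [Module ℚ GB]
    [AddCommGroup GC] [Module ℚ GC]
    [AddCommGroup H0] [Module ℚ H0]
    -- the weight filtration 0 = W₋₁ ≤ W0 ≤ W1 ≤ W2 = V
    [AddCommGroup H1] [Module ℚ H1]
    (W0 W1 : Submodule ℚ V) (hW01 : W0 ≤ W1)
    -- strictness: the bottom row 0 → gr^F_0(W₁V_ℂ) → gr^F_0 V_ℂ → gr^F_0(gr^W_2 V_ℂ) → 0 is exact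
    (ι : GA →ₗ[ℚ] GB) (π : GB →ₗ[ℚ] GC)
    (hι : Function.Injective ι) (hπ : Function.Surjective π)
    (hexact : LinearMap.range ι = LinearMap.ker π)
    -- the vertical maps of the commutative diagram
    (f1 : W1 →ₗ[ℚ] GA) (f : V →ₗ[ℚ] GB) (f2 : (V ⧸ W1) →ₗ[ℚ] GC)
    (hcomm1 : ∀ x : W1, ι (f1 x) = f (x : V))
    (hcomm2 : ∀ x : V, f2 (Submodule.Quotient.mk x) = π (f x))
    -- the exact row 0 → gr^F_0(gr^W_0 V_ℂ) → gr^F_0(W₁ V_ℂ) → gr^F_0(gr^W_1 V_ℂ) → 0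
    (j : H0 →ₗ[ℚ] GA) (q : GA →ₗ[ℚ] H1)
    (hj : Function.Injective j) (hexact' : LinearMap.range j = LinearMap.ker q)
    -- the natural maps gr^W_i V → gr^F_0(gr^W_i V_ℂ), i = 0, 1, and their injectivity
    (g0 : W0 →ₗ[ℚ] H0)
    (g1 : (W1 ⧸ (W0.comap W1.subtype)) →ₗ[ℚ] H1)
    (hg0 : Function.Injective g0)
    (hg1 : Function.Injective g1)
    (hcomm0 : ∀ x : W0, j (g0 x) = f1 ⟨(x : V), hW01 x.2⟩)
    (hcomm0' : ∀ x : W1, g1 (Submodule.Quotient.mk x) = q (f1 x)) :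
    ∀ v : V, f v = 0 → v ∈ W1 → v = 0 := by
  intro v hfv hvW1
  have hf1 : f1 ⟨v, hvW1⟩ = 0 := by
    apply hι
    rw [hcomm1, map_zero]; exact hfv
  have hq : q (f1 ⟨v, hvW1⟩) = 0 := by rw [hf1, map_zero]
  have hmk : (Submodule.Quotient.mk ⟨v, hvW1⟩ : W1 ⧸ (W0.comap W1.subtype)) = 0 := by
    apply hg1
    rw [hcomm0', hq, map_zero]
  have hvW0 : v ∈ W0 := by
    have := (Submodule.Quotient.mk_eq_zero _).mp hmk
    simpa using this
  have hg0v : g0 ⟨v, hvW0⟩ = 0 := by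
    apply hj
    rw [hcomm0, map_zero]
    exact hf1
  have := hg0 (by rw [hg0v, map_zero] : g0 ⟨v, hvW0⟩ = g0 0)
  simpa [Subtype.ext_iff] using this
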